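/- Let $(d_k^{(\tau)})_{k\in\mathbb{Z}}$, $\tau = 1,\dots,m$, be absolutely summable complex sequences and $D_n^{(\tau)} = ((d^{(\tau)}_{i-j}))$. Then for any $\epsilon_1,\dots,\epsilon_p\in\{1,*\}$ and $\tau_1,\dots,\tau_p\in\{1,\dots,m\}$, $\lim_{n\to\infty}\frac{1}{n}\mathrm{Tr}(D_n^{(\tau_1)\epsilon_1}\cdots D_n^{(\tau_p)\epsilon_p}) = \sum_{i_1,\dots,i_p=-\infty}^{\infty} d^{(\tau_1)\epsilon_1}_{i_1}\cdots d^{(\tau_p)\epsilon_p}_{i_p}\,\delta_{0,\sum_{t=1}^p \epsilon'_t i_t}$, where $d^* = \overline{d}$ and $\epsilon'_t = \pm 1$ according to $\epsilon_t = 1$ or $*$. -/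

import Mathlib

/-!
Since `(toep f n)ᴴ = toep (conjneg f) n`, every factor of the word is a Toeplitz matrix
`toep g_t n`. Expanding the trace of `toep g₁ n ⋯ toep g_p n` over closed walks
`v₀, v₁, …, v_p = v₀` in `{0, …, n - 1}` and grouping the walks by their steps
`k_t = v_{t-1} - v_t` gives `∑_k N_n(k) ∏_t g_t(k_t)`, where `N_n(k)` counts the closed walks with
steps `k`. A walk is determined by its start, so `N_n(k) ≤ n`; `N_n(k) = 0` unless `∑_t k_t = 0`,
and then every start at distance at least `∑_t |k_t|` from the boundary works, so
`N_n(k) / n → δ_{0, ∑ k_t}`. Dominated convergence, with the summable majorant `∏_t |g_t(k_t)|`,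
gives the limit, and the substitution `k_t = ε'_t i_t` puts it in the stated form.
-/

open Matrix Filter

/-- Toeplitz matrix with `(i,j)` entry `d (i - j)`. -/
def toep (d : ℤ → ℂ) (n : ℕ) : Matrix (Fin n) (Fin n) ℂ :=
  Matrix.of fun i j => d ((i : ℤ) - (j : ℤ))

/-- The sign `ε'`: `1` for `ε = 1` (encoded `true`) and `-1` for `ε = *` (encoded `false`). -/
def sgn (b : Bool) : ℤ := if b then 1 else -1

open Finset
open scoped Topology

theorem Matrix.list_prod_ofFn_apply {R ι : Type*} [CommSemiring R] [Fintype ι] [DecidableEq ι]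
    {p : ℕ} (M : Fin p → Matrix ι ι R) (a b : ι) :
    (List.ofFn M).prod a b =
      ∑ v : Fin (p + 1) → ι with v 0 = a ∧ v (Fin.last p) = b,
        ∏ t, M t (v t.castSucc) (v t.succ) := by
  rw [sum_filter]
  induction p generalizing a with
  | zero =>
    rw [← (Equiv.funUnique (Fin 1) ι).symm.sum_comp]
    simp [one_apply, ite_and]
  | succ p ih =>
    rw [List.ofFn_succ, List.prod_cons, mul_apply, ← (Fin.consEquiv _).sum_comp,
      Fintype.sum_prod_type]
    simp only [ih, mul_sum]
    rw [sum_comm]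
    simp [Fin.prod_univ_succ, ← Fin.succ_last, ite_and]

theorem Matrix.trace_list_prod_ofFn {R ι : Type*} [CommSemiring R] [Fintype ι] [DecidableEq ι]
    {p : ℕ} (M : Fin p → Matrix ι ι R) :
    trace (List.ofFn M).prod =
      ∑ v : Fin (p + 1) → ι with v 0 = v (Fin.last p), ∏ t, M t (v t.castSucc) (v t.succ) := by
  simp only [trace, diag, list_prod_ofFn_apply, sum_filter]
  rw [sum_comm]
  simp [ite_and, eq_comm]

theorem Finset.sum_comp_eq_tsum_card_nsmul {α β M : Type*} [AddCommMonoid M] [TopologicalSpace M]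
    [DecidableEq β] (s : Finset α) (g : α → β) (f : β → M) :
    ∑ a ∈ s, f (g a) = ∑' b, #{a ∈ s | g a = b} • f b := by
  rw [sum_comp, tsum_eq_sum]
  intro b hb
  rw [card_eq_zero.2 (filter_eq_empty_iff.2 fun a ha hab => hb (mem_image.2 ⟨a, ha, hab⟩)),
    zero_smul]

theorem Fin.partialSum_last {M : Type*} [AddCommMonoid M] {n : ℕ} (f : Fin n → M) :
    partialSum f (last n) = ∑ i, f i := by
  simp [partialSum, List.take_of_length_le, List.sum_ofFn]

theorem Fin.abs_partialSum_le {G : Type*} [AddCommGroup G] [LinearOrder G] [IsOrderedAddMonoid G]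
    {n : ℕ} (f : Fin n → G) (i : Fin (n + 1)) : |partialSum f i| ≤ ∑ t, |f t| := by
  have h1 : |partialSum f i| ≤ (((List.ofFn f).take i).map abs).sum := by
    simpa [partialSum] using Multiset.abs_sum_le_sum_abs (s := ((List.ofFn f).take i : Multiset G))
  have h2 : (((List.ofFn f).take i).map abs).sum ≤ ((List.ofFn f).map abs).sum :=
    ((List.take_sublist _ _).map _).sum_le_sum fun _ hx => by
      obtain ⟨y, -, rfl⟩ := List.mem_map.1 hx
      exact abs_nonneg y
  simpa [List.sum_ofFn] using h1.trans h2

theorem toep_conjTranspose (f : ℤ → ℂ) (n : ℕ) : (toep f n)ᴴ = toep (conjneg f) n := by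
  ext i j
  simp [toep]

theorem tendsto_natCast_div_self_of_le_of_le_add {u : ℕ → ℕ} {c : ℕ} (hle : ∀ n, u n ≤ n)
    (hge : ∀ n, n ≤ u n + c) : Tendsto (fun n => (u n : ℝ) / n) atTop (𝓝 1) := by
  have hlow : Tendsto (fun n : ℕ => 1 - (c : ℝ) / n) atTop (𝓝 1) := by
    simpa using tendsto_const_nhds.sub (tendsto_const_div_atTop_nhds_zero_nat (c : ℝ))
  refine tendsto_of_tendsto_of_tendsto_of_le_of_le' hlow tendsto_const_nhds ?_
    (Eventually.of_forall fun n => div_le_one_of_le₀ (by exact_mod_cast hle n) n.cast_nonneg)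
  filter_upwards [eventually_gt_atTop 0] with n hn
  have hn' : (0 : ℝ) < n := Nat.cast_pos.2 hn
  rw [le_div_iff₀ hn', sub_mul, div_mul_cancel₀ _ hn'.ne', one_mul, sub_le_iff_le_add]
  exact_mod_cast hge n

section ClosedWalks

variable {n p : ℕ}

def walkSteps (v : Fin (p + 1) → Fin n) (t : Fin p) : ℤ := (v t.castSucc : ℤ) - v t.succ

theorem coe_eq_sub_partialSum_walkSteps (v : Fin (p + 1) → Fin n) (s : Fin (p + 1)) :
    (v s : ℤ) = v 0 - Fin.partialSum (walkSteps v) s := by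
  induction s using Fin.induction with
  | zero => simp
  | succ t ih => rw [Fin.partialSum_succ, walkSteps]; omega

theorem sum_walkSteps (v : Fin (p + 1) → Fin n) : ∑ t, walkSteps v t = v 0 - v (Fin.last p) := by
  rw [← Fin.partialSum_last, coe_eq_sub_partialSum_walkSteps v (Fin.last p)]
  ring

variable (n) in
def closedWalkCount (k : Fin p → ℤ) : ℕ :=
  #{v : Fin (p + 1) → Fin n | v 0 = v (Fin.last p) ∧ walkSteps v = k}

theorem trace_list_prod_ofFn_toep (g : Fin p → ℤ → ℂ) :
    trace (List.ofFn fun t => toep (g t) n).prod =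
      ∑' k : Fin p → ℤ, (closedWalkCount n k : ℂ) * ∏ t, g t (k t) := by
  rw [trace_list_prod_ofFn]
  simp only [toep, of_apply]
  refine (sum_comp_eq_tsum_card_nsmul _ walkSteps fun k => ∏ t, g t (k t)).trans ?_
  simp [closedWalkCount, filter_filter]

theorem closedWalkCount_le (k : Fin p → ℤ) : closedWalkCount n k ≤ n := by
  classical
  refine (card_le_card_of_injOn (· 0) (fun _ _ => mem_univ _) ?_).trans_eq (card_fin n)
  intro v hv w hw h0
  simp only [mem_coe, mem_filter, mem_univ, true_and] at hv hw
  funext s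
  have hv' := coe_eq_sub_partialSum_walkSteps v s
  have hw' := coe_eq_sub_partialSum_walkSteps w s
  rw [hv.2] at hv'
  rw [hw.2] at hw'
  have : (v 0 : ℤ) = w 0 := congrArg _ (congrArg Fin.val h0)
  exact Fin.ext (by omega)

theorem closedWalkCount_eq_zero_of_sum_ne_zero (k : Fin p → ℤ) (hk : ∑ t, k t ≠ 0) :
    closedWalkCount n k = 0 := by
  refine card_eq_zero.2 (filter_eq_empty_iff.2 fun v _ hv => hk ?_)
  rw [← hv.2, sum_walkSteps, hv.1, sub_self]

theorem le_closedWalkCount_add (k : Fin p → ℤ) (hk : ∑ t, k t = 0) :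
    n ≤ closedWalkCount n k + 2 * ∑ t, (k t).natAbs := by
  set C := ∑ t, (k t).natAbs
  have hS : ∀ s, |Fin.partialSum k s| ≤ C := fun s => by
    simpa [C, Int.natCast_natAbs] using Fin.abs_partialSum_le k s
  -- Every start `x ∈ [C, n - C)` carries the closed walk `s ↦ x - partialSum k s`.
  have hsurj : Set.SurjOn (fun v : Fin (p + 1) → Fin n => (v 0 : ℕ))
      (({v | v 0 = v (Fin.last p) ∧ walkSteps v = k} : Finset (Fin (p + 1) → Fin n)) :
        Set (Fin (p + 1) → Fin n)) (Ico C (n - C) : Set ℕ) := by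
    intro x hx
    simp only [coe_Ico, Set.mem_Ico] at hx
    have hrange : ∀ s, 0 ≤ (x : ℤ) - Fin.partialSum k s ∧ (x : ℤ) - Fin.partialSum k s < n :=
      fun s => by have := abs_le.1 (hS s); omega
    let w : Fin (p + 1) → Fin n := fun s =>
      ⟨(x - Fin.partialSum k s).toNat, by have := hrange s; omega⟩
    have hw : ∀ s, ((w s : ℕ) : ℤ) = x - Fin.partialSum k s :=
      fun s => Int.toNat_of_nonneg (hrange s).1
    refine ⟨w, ?_, by simp [w]⟩
    simp only [mem_coe, mem_filter, mem_univ, true_and]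
    refine ⟨Fin.ext ?_, funext fun t => ?_⟩
    · have h0 := hw 0
      have hl := hw (Fin.last p)
      rw [Fin.partialSum_zero] at h0
      rw [Fin.partialSum_last, hk] at hl
      omega
    · rw [walkSteps, hw, hw, Fin.partialSum_succ]
      ring
  have := card_le_card_of_surjOn _ hsurj
  rw [Nat.card_Ico] at this
  unfold closedWalkCount
  omega

theorem tendsto_closedWalkCount_div (k : Fin p → ℤ) :
    Tendsto (fun n : ℕ => (closedWalkCount n k : ℂ) / n) atTop
      (𝓝 (if ∑ t, k t = 0 then 1 else 0)) := by
  split_ifs with hk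
  · have := tendsto_natCast_div_self_of_le_of_le_add (fun n => closedWalkCount_le k)
      (fun n => le_closedWalkCount_add k hk)
    simpa using this.ofReal
  · simp [closedWalkCount_eq_zero_of_sum_ne_zero k hk]

theorem norm_closedWalkCount_div_le (n : ℕ) (k : Fin p → ℤ) :
    ‖(closedWalkCount n k : ℂ) / n‖ ≤ 1 := by
  rw [norm_div, Complex.norm_natCast, Complex.norm_natCast]
  exact div_le_one_of_le₀ (by exact_mod_cast closedWalkCount_le k) n.cast_nonneg

end ClosedWalks

theorem summable_pi_prod_of_nonneg {ι : Type*} {p : ℕ} {f : Fin p → ι → ℝ}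
    (hf₀ : ∀ t x, 0 ≤ f t x) (hf : ∀ t, Summable (f t)) :
    Summable fun k : Fin p → ι => ∏ t, f t (k t) := by
  induction p with
  | zero => exact Summable.of_finite
  | succ p ih =>
    rw [← (Fin.consEquiv fun _ => ι).summable_iff]
    have := (hf 0).mul_of_nonneg (ih (fun t x => hf₀ t.succ x) fun t => hf t.succ) (hf₀ 0)
      fun r => prod_nonneg fun t _ => hf₀ t.succ (r t)
    simpa [Function.comp_def, Fin.prod_univ_succ] using this

theorem tendsto_inv_mul_trace_list_prod_ofFn_toep {p : ℕ} (g : Fin p → ℤ → ℂ)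
    (hg : ∀ t, Summable fun k => ‖g t k‖) :
    Tendsto (fun n : ℕ => (n : ℂ)⁻¹ * trace (List.ofFn fun t => toep (g t) n).prod) atTop
      (𝓝 (∑' k : Fin p → ℤ, (∏ t, g t (k t)) * if ∑ t, k t = 0 then 1 else 0)) := by
  simp_rw [trace_list_prod_ofFn_toep, ← tsum_mul_left]
  have hb := summable_pi_prod_of_nonneg (fun t x => norm_nonneg (g t x)) hg
  refine tendsto_tsum_of_dominated_convergence hb (fun k => ?_) ?_
  · convert (tendsto_closedWalkCount_div k).mul_const (∏ t, g t (k t)) using 2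
    · ring
    · exact mul_comm _ _
  · refine Eventually.of_forall fun n k => ?_
    rw [← mul_assoc, norm_mul, norm_prod, ← div_eq_inv_mul]
    exact mul_le_of_le_one_left (by positivity) (norm_closedWalkCount_div_le n k)

/-- For absolutely summable sequences `d⁽¹⁾,…,d⁽ᵐ⁾` and any word in the corresponding
deterministic Toeplitz matrices and their conjugate transposes,
`(1/n) Tr(D^{(τ₁)ε₁} ⋯ D^{(τ_p)ε_p}) →
  ∑_{i₁,…,i_p} d^{(τ₁)ε₁}_{i₁} ⋯ d^{(τ_p)ε_p}_{i_p} δ_{0, ∑ ε'_t i_t}`. -/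
theorem normalizedTrace_toeplitz_word_tendsto (m : ℕ) (d : Fin m → ℤ → ℂ)
    (hd : ∀ τ, Summable fun k : ℤ => ‖d τ k‖) (p : ℕ)
    (τ : Fin p → Fin m) (ε : Fin p → Bool) :
    Tendsto
      (fun n : ℕ =>
        (n : ℂ)⁻¹ *
          Matrix.trace
            (List.ofFn fun t =>
              if ε t then toep (d (τ t)) n else (toep (d (τ t)) n)ᴴ).prod)
      atTop
      (nhds (∑' i : Fin p → ℤ,
        (∏ t, if ε t then d (τ t) (i t) else (starRingEnd ℂ) (d (τ t) (i t))) *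
          (if ∑ t, sgn (ε t) * i t = 0 then (1 : ℂ) else 0))) := by
  let g t : ℤ → ℂ := if ε t then d (τ t) else conjneg (d (τ t))
  have hword (n : ℕ) : (List.ofFn fun t =>
      if ε t then toep (d (τ t)) n else (toep (d (τ t)) n)ᴴ) = List.ofFn fun t => toep (g t) n := by
    congr 1
    funext t
    by_cases h : ε t <;> simp [g, h, toep_conjTranspose]
  have hg (t : Fin p) : Summable fun k => ‖g t k‖ := by
    by_cases h : ε t
    · simpa [g, h] using hd (τ t)
    · simpa [g, h, Function.comp_def] using (hd (τ t)).comp_injective neg_injective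
  let e : Equiv.Perm (Fin p → ℤ) := Function.Involutive.toPerm (fun i t => sgn (ε t) * i t)
    fun i => funext fun t => show sgn (ε t) * (sgn (ε t) * i t) = i t by cases ε t <;> simp [sgn]
  have hlimit : ∑' i : Fin p → ℤ,
      (∏ t, if ε t then d (τ t) (i t) else (starRingEnd ℂ) (d (τ t) (i t))) *
        (if ∑ t, sgn (ε t) * i t = 0 then (1 : ℂ) else 0) =
      ∑' k : Fin p → ℤ, (∏ t, g t (k t)) * if ∑ t, k t = 0 then 1 else 0 := by
    refine (tsum_congr fun i => ?_).trans
      (e.tsum_eq fun k => (∏ t, g t (k t)) * if ∑ t, k t = 0 then 1 else 0)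
    refine congrArg₂ _ (prod_congr rfl fun t _ => ?_) rfl
    by_cases h : ε t <;> simp [g, e, h, sgn]
  simpa only [hword, hlimit] using tendsto_inv_mul_trace_list_prod_ofFn_toep g hg
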